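/- arXiv:2209.09625 — 8 statements merged into one kernel-verified Lean document; each statement's English description precedes it below -/
import Mathlib

section
/- Let T : X → Y be a linear operator between fuzzy strong φ-b-normed linear spaces (with the same φ and constant K). Then the following two conditions are equivalent: (1) for each α ∈ (0,1) there exists M_α > 0 such that for all t > 0, N₁(x, t/M_α) ≥ 1−α implies N₂(Tx, Ks) ≥ α for all s > t; (2) for each α ∈ (0,1) there exists M_α > 0 such that inf{t > 0 : N₂(Tx, Kt) ≥ α} ≤ M_α · inf{t > 0 : N₁(x, t) ≥ 1−α} for all x ∈ X. -/
open Filter Topology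

structure PhiFun (φ : ℝ → ℝ) : Prop where
  even : ∀ t, φ (-t) = φ t
  one : φ 1 = 1
  strictMono : StrictMonoOn φ (Set.Ioi 0)
  contOn : ContinuousOn φ (Set.Ioi 0)
  tendsto_zero : Tendsto φ (nhdsWithin 0 (Set.Ioi 0)) (nhds 0)
  tendsto_atTop : Tendsto φ atTop atTop

structure IsTNorm (star : ℝ → ℝ → ℝ) : Prop where
  mem : ∀ a ∈ Set.Icc (0:ℝ) 1, ∀ b ∈ Set.Icc (0:ℝ) 1, star a b ∈ Set.Icc (0:ℝ) 1
  assoc : ∀ a b c, star (star a b) c = star a (star b c)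
  comm : ∀ a b, star a b = star b a
  one_right : ∀ a ∈ Set.Icc (0:ℝ) 1, star a 1 = a
  mono : ∀ a b c d, a ≤ b → c ≤ d → star a c ≤ star b d

structure IsFuzzyPhiBNorm {X : Type*} [AddCommGroup X] [Module ℝ X]
    (N : X → ℝ → ℝ) (φ : ℝ → ℝ) (K : ℝ) (star : ℝ → ℝ → ℝ) : Prop where
  one_le_K : 1 ≤ K
  phi : PhiFun φ
  tnorm : IsTNorm star
  mem : ∀ x t, N x t ∈ Set.Icc (0:ℝ) 1
  bN1 : ∀ x : X, ∀ t ≤ (0:ℝ), N x t = 0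
  bN2 : ∀ x : X, (∀ t > (0:ℝ), N x t = 1) ↔ x = 0
  bN3 : ∀ (c : ℝ) (x : X), ∀ t > (0:ℝ), φ c ≠ 0 → N (c • x) t = N x (t / φ c)
  bN4 : ∀ (x y : X) (s t : ℝ), star (N x s) (N y t) ≤ N (x + y) (s + K * t)
  bN5 : ∀ x : X, Monotone (N x) ∧ Tendsto (N x) atTop (nhds 1)

noncomputable def FuzzyBounded {X Y : Type*} [AddCommGroup X] [Module ℝ X]
    [AddCommGroup Y] [Module ℝ Y]
    (N1 : X → ℝ → ℝ) (N2 : Y → ℝ → ℝ) (K : ℝ) (T : X →ₗ[ℝ] Y) : Prop :=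
  ∀ α ∈ Set.Ioo (0:ℝ) 1, ∃ M > (0:ℝ), ∀ x : X,
    sInf {t | 0 < t ∧ α ≤ N2 (T x) (K * t)} ≤ M * sInf {t | 0 < t ∧ 1 - α ≤ N1 x t}

lemma aux_nonempty (f : ℝ → ℝ) (hf : Tendsto f atTop (nhds 1)) {β : ℝ} (hβ : β < 1) :
    {t | 0 < t ∧ β ≤ f t}.Nonempty := by
  obtain ⟨t, h1, h2⟩ := ((hf.eventually (eventually_ge_nhds hβ)).and
    (eventually_gt_atTop 0)).exists
  exact ⟨t, h2, h1⟩

theorem stmt1 {X Y : Type*} [AddCommGroup X] [Module ℝ X] [AddCommGroup Y] [Module ℝ Y]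
    (N1 : X → ℝ → ℝ) (N2 : Y → ℝ → ℝ) (φ : ℝ → ℝ) (K : ℝ)
    (star1 star2 : ℝ → ℝ → ℝ)
    (hN1 : IsFuzzyPhiBNorm N1 φ K star1) (hN2 : IsFuzzyPhiBNorm N2 φ K star2)
    (T : X →ₗ[ℝ] Y) :
    (∀ α ∈ Set.Ioo (0:ℝ) 1, ∃ M > (0:ℝ), ∀ x : X, ∀ t > (0:ℝ),
        1 - α ≤ N1 x (t / M) → ∀ s > t, α ≤ N2 (T x) (K * s)) ↔
    (∀ α ∈ Set.Ioo (0:ℝ) 1, ∃ M > (0:ℝ), ∀ x : X,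
        sInf {t | 0 < t ∧ α ≤ N2 (T x) (K * t)} ≤
          M * sInf {t | 0 < t ∧ 1 - α ≤ N1 x t}) := by
  have hK : (0:ℝ) < K := lt_of_lt_of_le one_pos hN1.one_le_K
  constructor
  · intro h α hα
    obtain ⟨M, hM, hMspec⟩ := h α hα
    refine ⟨M, hM, fun x => ?_⟩
    have hAne : {t | 0 < t ∧ 1 - α ≤ N1 x t}.Nonempty :=
      aux_nonempty _ (hN1.bN5 x).2 (by linarith [hα.1])
    have hBbd : BddBelow {t | 0 < t ∧ α ≤ N2 (T x) (K * t)} :=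
      ⟨0, fun t ht => le_of_lt ht.1⟩
    have key : ∀ u ∈ {t | 0 < t ∧ 1 - α ≤ N1 x t},
        sInf {t | 0 < t ∧ α ≤ N2 (T x) (K * t)} ≤ M * u := by
      intro u hu
      have ht : 1 - α ≤ N1 x ((M * u) / M) := by
        rw [mul_div_cancel_left₀ _ (ne_of_gt hM)]; exact hu.2
      have h2 := hMspec x (M * u) (mul_pos hM hu.1) ht
      have hsub : Set.Ioi (M * u) ⊆ {t | 0 < t ∧ α ≤ N2 (T x) (K * t)} :=
        fun s hs => ⟨lt_trans (mul_pos hM hu.1) hs, h2 s hs⟩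
      calc sInf {t | 0 < t ∧ α ≤ N2 (T x) (K * t)}
          ≤ sInf (Set.Ioi (M * u)) := csInf_le_csInf hBbd ⟨M * u + 1, by simp⟩ hsub
        _ = M * u := csInf_Ioi
    have hdiv : sInf {t | 0 < t ∧ α ≤ N2 (T x) (K * t)} / M ≤
        sInf {t | 0 < t ∧ 1 - α ≤ N1 x t} := by
      refine le_csInf hAne fun u hu => ?_
      rw [div_le_iff₀ hM, mul_comm]
      exact key u hu
    rw [div_le_iff₀ hM] at hdiv
    linarith [hdiv]
  · intro h α hα
    obtain ⟨M, hM, hMspec⟩ := h α hα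
    refine ⟨M, hM, fun x t ht h1 s hs => ?_⟩
    have hBne : {t | 0 < t ∧ α ≤ N2 (T x) (K * t)}.Nonempty := by
      refine aux_nonempty _ ?_ hα.2
      exact (hN2.bN5 (T x)).2.comp (Tendsto.const_mul_atTop hK tendsto_id)
    have hAbd : BddBelow {t | 0 < t ∧ 1 - α ≤ N1 x t} := ⟨0, fun u hu => le_of_lt hu.1⟩
    have htA : t / M ∈ {t | 0 < t ∧ 1 - α ≤ N1 x t} := ⟨div_pos ht hM, h1⟩
    have hsB : sInf {t | 0 < t ∧ α ≤ N2 (T x) (K * t)} ≤ t := by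
      calc sInf {t | 0 < t ∧ α ≤ N2 (T x) (K * t)}
          ≤ M * sInf {t | 0 < t ∧ 1 - α ≤ N1 x t} := hMspec x
        _ ≤ M * (t / M) := by
            exact mul_le_mul_of_nonneg_left (csInf_le hAbd htA) (le_of_lt hM)
        _ = t := mul_div_cancel₀ _ (ne_of_gt hM)
    obtain ⟨u, huB, hus⟩ := exists_lt_of_csInf_lt hBne (lt_of_le_of_lt hsB hs)
    exact le_trans huB.2 ((hN2.bN5 (T x)).1
      (mul_le_mul_of_nonneg_left (le_of_lt hus) (le_of_lt hK)))
end

section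
/- Let (X, N, φ, K, *) be a fuzzy strong φ-b-normed linear space whose t-norm * is continuous at (1,1). Then for each α ∈ (0,1) there exists β ∈ (0,1) with β ≥ α such that for all x, y ∈ X, inf{s+t > 0 : N(x+y, K(s+t)) ≥ α} ≤ inf{s > 0 : N(x,s) ≥ β} + inf{t > 0 : N(y,t) ≥ β}. -/
open Filter Topology

theorem stmt2 {X : Type*} [AddCommGroup X] [Module ℝ X]
    (N : X → ℝ → ℝ) (φ : ℝ → ℝ) (K : ℝ) (star : ℝ → ℝ → ℝ)
    (hN : IsFuzzyPhiBNorm N φ K star)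
    (hcont : ∀ α ∈ Set.Ioo (0:ℝ) 1, ∃ β ∈ Set.Ioo (0:ℝ) 1, α ≤ star β β) :
    ∀ α ∈ Set.Ioo (0:ℝ) 1, ∃ β ∈ Set.Ioo (0:ℝ) 1, α ≤ β ∧
      ∀ x y : X,
        sInf {u | 0 < u ∧ α ≤ N (x + y) (K * u)} ≤
          sInf {s | 0 < s ∧ β ≤ N x s} + sInf {t | 0 < t ∧ β ≤ N y t} := by

  intro α hα
  obtain ⟨β', hβ', hstar⟩ := hcont α hα
  have hβ1 : max α β' < 1 := max_lt hα.2 hβ'.2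
  have hβ0 : 0 < max α β' := lt_max_of_lt_left hα.1
  refine ⟨max α β', ⟨hβ0, hβ1⟩, le_max_left _ _, ?_⟩
  intro x y
  set β := max α β' with hβ
  have hne : ∀ z : X, {s | 0 < s ∧ β ≤ N z s}.Nonempty := by
    intro z
    have h := (hN.bN5 z).2.eventually (eventually_gt_nhds hβ1)
    obtain ⟨s, hs1, hs2⟩ := (h.and (eventually_gt_atTop 0)).exists
    exact ⟨s, hs2, hs1.le⟩
  have hbddS : BddBelow {s | 0 < s ∧ β ≤ N x s} := ⟨0, fun u hu => hu.1.le⟩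
  have hbddT : BddBelow {t | 0 < t ∧ β ≤ N y t} := ⟨0, fun u hu => hu.1.le⟩
  have hbddA : BddBelow {u | 0 < u ∧ α ≤ N (x + y) (K * u)} := ⟨0, fun u hu => hu.1.le⟩
  have key : ∀ s ∈ {s | 0 < s ∧ β ≤ N x s}, ∀ t ∈ {t | 0 < t ∧ β ≤ N y t},
      sInf {u | 0 < u ∧ α ≤ N (x + y) (K * u)} ≤ s + t := by
    intro s hs t ht
    apply csInf_le hbddA
    refine ⟨add_pos hs.1 ht.1, ?_⟩
    have h1 : star β β ≤ star (N x s) (N y t) := hN.tnorm.mono _ _ _ _ hs.2 ht.2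
    have h2 : star β' β' ≤ star β β := hN.tnorm.mono _ _ _ _ (le_max_right _ _) (le_max_right _ _)
    have h3 : α ≤ N (x + y) (s + K * t) := le_trans (le_trans hstar (le_trans h2 h1)) (hN.bN4 x y s t)
    have h4 : s + K * t ≤ K * (s + t) := by nlinarith [hN.one_le_K, hs.1]
    exact le_trans h3 ((hN.bN5 (x + y)).1 h4)
  have step : ∀ s ∈ {s | 0 < s ∧ β ≤ N x s},
      sInf {u | 0 < u ∧ α ≤ N (x + y) (K * u)} - s ≤ sInf {t | 0 < t ∧ β ≤ N y t} := by
    intro s hs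
    exact le_csInf (hne y) (fun t ht => by linarith [key s hs t ht])
  have step2 : sInf {u | 0 < u ∧ α ≤ N (x + y) (K * u)} - sInf {t | 0 < t ∧ β ≤ N y t} ≤
      sInf {s | 0 < s ∧ β ≤ N x s} :=
    le_csInf (hne x) (fun s hs => by linarith [step s hs])
  linarith
end

section
/- Let X and Y be fuzzy strong φ-b-normed linear spaces with the same φ and K, and suppose the t-norm on Y is continuous at (1,1). Then the set BF(X,Y) of fuzzy bounded linear operators from X to Y is a linear subspace of the space L(X,Y) of all linear operators; that is, if T₁, T₂ are fuzzy bounded and k₁, k₂ are nonzero scalars, then k₁T₁ + k₂T₂ is fuzzy bounded. -/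
open Filter Topology

/-- A φ-function is positive away from 0. -/
lemma phiFun_pos {φ : ℝ → ℝ} (hφ : PhiFun φ) {c : ℝ} (hc : c ≠ 0) : 0 < φ c := by
  -- reduce to the case c > 0
  have key : ∀ t : ℝ, 0 < t → 0 < φ t := by
    intro t ht
    by_contra h
    push_neg at h
    have hs : (0:ℝ) < t / 2 := by linarith
    have hst : t / 2 < t := by linarith
    have hlt : φ (t / 2) < φ t := hφ.strictMono hs ht hst
    have hneg : φ (t / 2) < 0 := lt_of_lt_of_le hlt h
    -- near 0⁺, φ is close to 0, hence > φ (t/2); but strict monotonicity says φ u < φ (t/2)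
    have hev : ∀ᶠ u in nhdsWithin 0 (Set.Ioi 0), φ (t/2) < φ u :=
      hφ.tendsto_zero (Ioi_mem_nhds hneg)
    have hev2 : ∀ᶠ u in nhdsWithin 0 (Set.Ioi 0), u < t/2 ∧ 0 < u := by
      filter_upwards [Ioo_mem_nhdsGT_of_mem (Set.left_mem_Ico.mpr hs)] with u hu
      exact ⟨hu.2, hu.1⟩
    obtain ⟨u, hu1, hu2, hu3⟩ := ((hev.and hev2).exists)
    exact absurd (hφ.strictMono hu3 hs hu2) (not_lt.mpr hu1.le)
  rcases lt_or_gt_of_ne hc with h | h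
  · have := key (-c) (by linarith)
    rwa [hφ.even] at this
  · exact key c h

/-- Combining lemma for infima. -/
lemma csInf_combine {S₁ S₂ : Set ℝ} (hS₁ : S₁.Nonempty) (hS₂ : S₂.Nonempty)
    (hb₁ : BddBelow S₁) (hb₂ : BddBelow S₂) {a b c : ℝ} (ha : 0 < a) (hb : 0 < b)
    (h : ∀ t₁ ∈ S₁, ∀ t₂ ∈ S₂, c ≤ a * t₁ + b * t₂) :
    c ≤ a * sInf S₁ + b * sInf S₂ := by
  have h1 : ∀ t₁ ∈ S₁, c - a * t₁ ≤ b * sInf S₂ := by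
    intro t₁ ht₁
    rw [← div_le_iff₀' hb]
    refine le_csInf hS₂ fun t₂ ht₂ => ?_
    rw [div_le_iff₀ hb]
    have := h t₁ ht₁ t₂ ht₂
    linarith [h t₁ ht₁ t₂ ht₂]
  have h2 : (c - b * sInf S₂) / a ≤ sInf S₁ := by
    refine le_csInf hS₁ fun t₁ ht₁ => ?_
    rw [div_le_iff₀ ha]
    linarith [h1 t₁ ht₁]
  rw [div_le_iff₀ ha] at h2
  linarith

lemma fuzzyNorm_set_nonempty {W : Type*} [AddCommGroup W] [Module ℝ W]
    {N : W → ℝ → ℝ} {φ : ℝ → ℝ} {K : ℝ} {st : ℝ → ℝ → ℝ}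
    (hN : IsFuzzyPhiBNorm N φ K st) (w : W) {c : ℝ} (hc : c < 1) :
    ∃ t, 0 < t ∧ c ≤ N w t := by
  have h1 : ∀ᶠ t in atTop, c < N w t := (hN.bN5 w).2 (Ioi_mem_nhds hc)
  have h2 : ∀ᶠ t : ℝ in atTop, 0 < t := eventually_gt_atTop 0
  obtain ⟨t, ht1, ht2⟩ := (h1.and h2).exists
  exact ⟨t, ht2, ht1.le⟩

theorem stmt3 {X Y : Type*} [AddCommGroup X] [Module ℝ X] [AddCommGroup Y] [Module ℝ Y]
    (N1 : X → ℝ → ℝ) (N2 : Y → ℝ → ℝ) (φ : ℝ → ℝ) (K : ℝ)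
    (star1 star2 : ℝ → ℝ → ℝ)
    (hN1 : IsFuzzyPhiBNorm N1 φ K star1) (hN2 : IsFuzzyPhiBNorm N2 φ K star2)
    (hcont : ∀ α ∈ Set.Ioo (0:ℝ) 1, ∃ β ∈ Set.Ioo (0:ℝ) 1, α ≤ star2 β β)
    (T₁ T₂ : X →ₗ[ℝ] Y) (hT₁ : FuzzyBounded N1 N2 K T₁) (hT₂ : FuzzyBounded N1 N2 K T₂)
    (k₁ k₂ : ℝ) (hk₁ : k₁ ≠ 0) (hk₂ : k₂ ≠ 0) :
    FuzzyBounded N1 N2 K (k₁ • T₁ + k₂ • T₂) := by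
  have hK : (0:ℝ) < K := lt_of_lt_of_le one_pos hN2.one_le_K
  have hφ1 : 0 < φ k₁ := phiFun_pos hN2.phi hk₁
  have hφ2 : 0 < φ k₂ := phiFun_pos hN2.phi hk₂
  intro α hα
  obtain ⟨β, hβ, hαβ⟩ := hcont α hα
  have hβα : α ≤ β := by
    have h1 : star2 β β ≤ star2 β 1 :=
      hN2.tnorm.mono β β β 1 le_rfl hβ.2.le
    have h2 : star2 β 1 = β := hN2.tnorm.one_right β ⟨hβ.1.le, hβ.2.le⟩
    linarith
  obtain ⟨M₁, hM₁pos, hM₁⟩ := hT₁ β hβ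
  obtain ⟨M₂, hM₂pos, hM₂⟩ := hT₂ β hβ
  refine ⟨φ k₁ * M₁ + K * φ k₂ * M₂, by positivity, ?_⟩
  intro x
  set S₁ : Set ℝ := {t | 0 < t ∧ β ≤ N2 (T₁ x) (K * t)} with hS₁def
  set S₂ : Set ℝ := {t | 0 < t ∧ β ≤ N2 (T₂ x) (K * t)} with hS₂def
  set Sβ : Set ℝ := {t | 0 < t ∧ 1 - β ≤ N1 x t} with hSβdef
  set Sα : Set ℝ := {t | 0 < t ∧ 1 - α ≤ N1 x t} with hSαdef
  have hneS₁ : S₁.Nonempty := by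
    obtain ⟨t, ht, htN⟩ := fuzzyNorm_set_nonempty hN2 (T₁ x) hβ.2
    exact ⟨t / K, by positivity, by rwa [mul_div_cancel₀ _ hK.ne']⟩
  have hneS₂ : S₂.Nonempty := by
    obtain ⟨t, ht, htN⟩ := fuzzyNorm_set_nonempty hN2 (T₂ x) hβ.2
    exact ⟨t / K, by positivity, by rwa [mul_div_cancel₀ _ hK.ne']⟩
  have hneSα : Sα.Nonempty := by
    obtain ⟨t, ht, htN⟩ := fuzzyNorm_set_nonempty hN1 x (show 1 - α < 1 by linarith [hα.1])
    exact ⟨t, ht, htN⟩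
  have hsub : Sα ⊆ Sβ := fun t ht => ⟨ht.1, by have := ht.2; dsimp at *; linarith⟩
  have hneSβ : Sβ.Nonempty := hneSα.mono hsub
  have hbdd : ∀ S : Set ℝ, (∀ t ∈ S, (0:ℝ) < t) → BddBelow S := by
    intro S hS
    exact ⟨0, fun t ht => (hS t ht).le⟩
  have hb₁ : BddBelow S₁ := hbdd S₁ fun t ht => ht.1
  have hb₂ : BddBelow S₂ := hbdd S₂ fun t ht => ht.1
  have hbβ : BddBelow Sβ := hbdd Sβ fun t ht => ht.1
  -- key membership
  have hkey : ∀ t₁ ∈ S₁, ∀ t₂ ∈ S₂,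
      sInf {t | 0 < t ∧ α ≤ N2 ((k₁ • T₁ + k₂ • T₂) x) (K * t)} ≤
        φ k₁ * t₁ + (K * φ k₂) * t₂ := by
    intro t₁ ht₁ t₂ ht₂
    obtain ⟨ht₁pos, ht₁N⟩ := ht₁
    obtain ⟨ht₂pos, ht₂N⟩ := ht₂
    have hmem : (φ k₁ * t₁ + (K * φ k₂) * t₂) ∈
        {t | 0 < t ∧ α ≤ N2 ((k₁ • T₁ + k₂ • T₂) x) (K * t)} := by
      constructor
      · positivity
      · have e1 : N2 (k₁ • T₁ x) (φ k₁ * (K * t₁)) = N2 (T₁ x) (K * t₁) := by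
          rw [hN2.bN3 k₁ (T₁ x) _ (by positivity) hφ1.ne']
          congr 1
          field_simp
        have e2 : N2 (k₂ • T₂ x) (φ k₂ * (K * t₂)) = N2 (T₂ x) (K * t₂) := by
          rw [hN2.bN3 k₂ (T₂ x) _ (by positivity) hφ2.ne']
          congr 1
          field_simp
        have h4 := hN2.bN4 (k₁ • T₁ x) (k₂ • T₂ x) (φ k₁ * (K * t₁)) (φ k₂ * (K * t₂))
        have hstar : α ≤ star2 (N2 (k₁ • T₁ x) (φ k₁ * (K * t₁)))
            (N2 (k₂ • T₂ x) (φ k₂ * (K * t₂))) := by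
          refine le_trans hαβ (hN2.tnorm.mono _ _ _ _ ?_ ?_)
          · rw [e1]; exact ht₁N
          · rw [e2]; exact ht₂N
        have heq : φ k₁ * (K * t₁) + K * (φ k₂ * (K * t₂)) =
            K * (φ k₁ * t₁ + (K * φ k₂) * t₂) := by ring
        have happ : (k₁ • T₁ + k₂ • T₂) x = k₁ • T₁ x + k₂ • T₂ x := by
          simp
        rw [happ, ← heq]
        exact le_trans hstar h4
    exact csInf_le (hbdd _ fun t ht => ht.1) hmem
  have hcomb := csInf_combine hneS₁ hneS₂ hb₁ hb₂ hφ1 (by positivity) hkey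
  have hi₁ : sInf S₁ ≤ M₁ * sInf Sβ := hM₁ x
  have hi₂ : sInf S₂ ≤ M₂ * sInf Sβ := hM₂ x
  have hβα' : sInf Sβ ≤ sInf Sα := csInf_le_csInf hbβ hneSα hsub
  calc sInf {t | 0 < t ∧ α ≤ N2 ((k₁ • T₁ + k₂ • T₂) x) (K * t)}
      ≤ φ k₁ * sInf S₁ + (K * φ k₂) * sInf S₂ := hcomb
    _ ≤ φ k₁ * (M₁ * sInf Sβ) + (K * φ k₂) * (M₂ * sInf Sβ) := by
        have := mul_le_mul_of_nonneg_left hi₁ hφ1.le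
        have := mul_le_mul_of_nonneg_left hi₂ (by positivity : (0:ℝ) ≤ K * φ k₂)
        linarith
    _ = (φ k₁ * M₁ + K * φ k₂ * M₂) * sInf Sβ := by ring
    _ ≤ (φ k₁ * M₁ + K * φ k₂ * M₂) * sInf Sα := by
        exact mul_le_mul_of_nonneg_left hβα' (by positivity)
end

section
/- Let T : X → Y be a linear operator between fuzzy strong φ-b-normed linear spaces. If T is fuzzy continuous at some point x₀ ∈ X, then T is fuzzy continuous at every point of X. -/
open Filter Topology

def FConv {Y : Type*} [AddCommGroup Y]
    (N : Y → ℝ → ℝ) (y : ℕ → Y) (l : Y) : Prop :=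
  ∀ t > (0:ℝ), Tendsto (fun n => N (y n - l) t) atTop (nhds 1)

def FContAt {X Y : Type*} [AddCommGroup X] [Module ℝ X] [AddCommGroup Y] [Module ℝ Y]
    (N1 : X → ℝ → ℝ) (N2 : Y → ℝ → ℝ) (T : X →ₗ[ℝ] Y) (x : X) : Prop :=
  ∀ xs : ℕ → X, FConv N1 xs x → FConv N2 (fun n => T (xs n)) (T x)

theorem stmt4 {X Y : Type*} [AddCommGroup X] [Module ℝ X] [AddCommGroup Y] [Module ℝ Y]
    (N1 : X → ℝ → ℝ) (N2 : Y → ℝ → ℝ) (φ : ℝ → ℝ) (K : ℝ)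
    (star1 star2 : ℝ → ℝ → ℝ)
    (hN1 : IsFuzzyPhiBNorm N1 φ K star1) (hN2 : IsFuzzyPhiBNorm N2 φ K star2)
    (T : X →ₗ[ℝ] Y) (x₀ : X) (h : FContAt N1 N2 T x₀) :
    ∀ x : X, FContAt N1 N2 T x := by
  intro x xs hxs
  have key : FConv N1 (fun n => xs n - x + x₀) x₀ := by
    intro t ht
    simpa using hxs t ht
  have h2 := h _ key
  intro t ht
  have h3 := h2 t ht
  have : (fun n => N2 (T (xs n - x + x₀) - T x₀) t)
      = fun n => N2 (T (xs n) - T x) t := by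
    funext n
    congr 1
    simp [map_add, map_sub]
  rwa [this] at h3
end

section
/- Let T : X → Y be a fuzzy bounded linear operator between fuzzy strong φ-b-normed linear spaces. Then T is fuzzy continuous, i.e., for every x ∈ X and every sequence (xₙ) with lim_{n→∞} N₁(xₙ − x, t) = 1 for all t > 0, one has lim_{n→∞} N₂(Txₙ − Tx, t) = 1 for all t > 0. -/
open Filter Topology

/-!
A fuzzy bounded operator satisfies a uniform ε-δ estimate: for a level `α` with constant `M`,
`N₁ x δ ≥ 1 - α` puts `δ` into the set whose infimum controls the `α`-level of `T x`, so that
infimum is below `M δ`; taking `M δ < t / K` and using monotonicity of `N₂ (T x)` gives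
`N₂ (T x) t ≥ α`. Applied to `x = xₙ - x`, this turns `N₁ (xₙ - x) δ → 1` into
`N₂ (T xₙ - T x) t → 1`.
-/

theorem tendsto_one_of_forall_eventually_le {ι : Type*} {l : Filter ι} {u : ι → ℝ}
    (hle : ∀ i, u i ≤ 1) (h : ∀ α ∈ Set.Ioo (0:ℝ) 1, ∀ᶠ i in l, α ≤ u i) :
    Tendsto u l (𝓝 1) := by
  refine tendsto_order.2
    ⟨fun a ha => ?_, fun a ha => Eventually.of_forall fun i => (hle i).trans_lt ha⟩
  obtain ⟨α, hmax, hα1⟩ := exists_between (max_lt ha one_pos)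
  exact (h α ⟨(le_max_right a 0).trans_lt hmax, hα1⟩).mono fun i hi =>
    ((le_max_left a 0).trans_lt hmax).trans_le hi

theorem le_apply_of_sInf_lt {f : ℝ → ℝ} {K α r : ℝ} (hK : 0 < K) (hf : Monotone f)
    (hlim : Tendsto f atTop (𝓝 1)) (hα : α < 1)
    (hr : sInf {s | 0 < s ∧ α ≤ f (K * s)} < r) : α ≤ f (K * r) := by
  have hne : {s | 0 < s ∧ α ≤ f (K * s)}.Nonempty := by
    have hev : ∀ᶠ s in atTop, 0 < s ∧ α ≤ f (K * s) :=
      (eventually_gt_atTop 0).and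
        ((hlim.comp (tendsto_id.const_mul_atTop hK)).eventually (eventually_ge_nhds hα))
    exact hev.exists
  obtain ⟨s, ⟨-, hs⟩, hsr⟩ := (csInf_lt_iff ⟨0, fun s hs => hs.1.le⟩ hne).1 hr
  exact hs.trans (hf (mul_le_mul_of_nonneg_left hsr.le hK.le))

theorem FuzzyBounded.exists_pos_forall_le {X Y : Type*} [AddCommGroup X] [Module ℝ X]
    [AddCommGroup Y] [Module ℝ Y] {N1 : X → ℝ → ℝ} {N2 : Y → ℝ → ℝ} {K : ℝ}
    {T : X →ₗ[ℝ] Y} (hT : FuzzyBounded N1 N2 K T) (hK : 0 < K)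
    (hmono : ∀ y, Monotone (N2 y)) (hlim : ∀ y, Tendsto (N2 y) atTop (𝓝 1))
    {α : ℝ} (hα : α ∈ Set.Ioo (0:ℝ) 1) {t : ℝ} (ht : 0 < t) :
    ∃ δ > 0, ∀ x, 1 - α ≤ N1 x δ → α ≤ N2 (T x) t := by
  obtain ⟨M, hM, hbound⟩ := hT α hα
  refine ⟨t / (2 * K * M), by positivity, fun x hx => ?_⟩
  have hsInf : sInf {s | 0 < s ∧ α ≤ N2 (T x) (K * s)} < t / K := calc
    _ ≤ M * sInf {s | 0 < s ∧ 1 - α ≤ N1 x s} := hbound x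
    _ ≤ M * (t / (2 * K * M)) :=
      mul_le_mul_of_nonneg_left (csInf_le ⟨0, fun s hs => hs.1.le⟩ ⟨by positivity, hx⟩) hM.le
    _ = t / (2 * K) := by field_simp
    _ < t / K := div_lt_div_of_pos_left ht hK (by linarith)
  simpa [mul_div_cancel₀ t hK.ne'] using
    le_apply_of_sInf_lt hK (hmono _) (hlim _) hα.2 hsInf

theorem stmt5_general {X Y : Type*} [AddCommGroup X] [Module ℝ X] [AddCommGroup Y] [Module ℝ Y]
    (N1 : X → ℝ → ℝ) (N2 : Y → ℝ → ℝ) (φ : ℝ → ℝ) (K : ℝ)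
    (star2 : ℝ → ℝ → ℝ)
    (hN2 : IsFuzzyPhiBNorm N2 φ K star2)
    (T : X →ₗ[ℝ] Y) (hT : FuzzyBounded N1 N2 K T) :
    ∀ x : X, FContAt N1 N2 T x := by
  intro x xs hconv t ht
  have hK : 0 < K := one_pos.trans_le hN2.one_le_K
  refine tendsto_one_of_forall_eventually_le (fun n => (hN2.mem _ _).2) fun α hα => ?_
  obtain ⟨δ, hδ, hTδ⟩ := hT.exists_pos_forall_le hK (fun y => (hN2.bN5 y).1)
    (fun y => (hN2.bN5 y).2) hα ht
  filter_upwards [(hconv δ hδ).eventually (eventually_ge_nhds (sub_lt_self 1 hα.1))] with n hn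
  simpa only [map_sub] using hTδ _ hn

theorem stmt5 {X Y : Type*} [AddCommGroup X] [Module ℝ X] [AddCommGroup Y] [Module ℝ Y]
    (N1 : X → ℝ → ℝ) (N2 : Y → ℝ → ℝ) (φ : ℝ → ℝ) (K : ℝ)
    (star1 star2 : ℝ → ℝ → ℝ)
    (hN1 : IsFuzzyPhiBNorm N1 φ K star1) (hN2 : IsFuzzyPhiBNorm N2 φ K star2)
    (T : X →ₗ[ℝ] Y) (hT : FuzzyBounded N1 N2 K T) :
    ∀ x : X, FContAt N1 N2 T x :=
  stmt5_general N1 N2 φ K star2 hN2 T hT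
end

section
/- There exists a fuzzy continuous linear operator between fuzzy strong φ-b-normed linear spaces that is not fuzzy bounded. Concretely: let (X, ‖·‖) be a nontrivial normed linear space, let N₁(x,t) = 1 if t > ‖x‖, = 1/2 if 0 < t < ‖x‖ (take also N₁(x,‖x‖)=1/2 for x ≠ 0), = 0 if t ≤ 0, and N₂(x,t) = 1 − ‖x‖/t if t ≥ ‖x‖ and t > 0, = 0 otherwise. With * = min, φ(α) = |α|, K = 1, both (X, N₁) and (X, N₂) are fuzzy strong φ-b-normed linear spaces, and the operator T : (X, N₁) → (X, N₂), Tx = 2x, is fuzzy continuous but not fuzzy bounded. -/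
open Filter Topology

noncomputable def Nex1 {X : Type*} [NormedAddCommGroup X] (x : X) (t : ℝ) : ℝ :=
  if ‖x‖ < t then 1 else if 0 < t then 1/2 else 0

noncomputable def Nex2 {X : Type*} [NormedAddCommGroup X] (x : X) (t : ℝ) : ℝ :=
  if ‖x‖ ≤ t ∧ 0 < t then 1 - ‖x‖ / t else 0

/-!
For `t > 0`, `Nex1 x t` is `1` if `‖x‖ < t` and `1/2` otherwise. Hence `Nex1 (xₙ - x) δ → 1`
forces `‖xₙ - x‖ < δ` eventually, so fuzzy convergence for `Nex1` is norm convergence, which in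
turn gives fuzzy convergence for `Nex2`: every norm-continuous linear map is fuzzy continuous.
But at level `α = 1/2` every `x` satisfies `1 - α ≤ Nex1 x t` for all `t > 0`, so the right-hand
infimum in fuzzy boundedness is `0`, while the left one is at least `2‖T x‖ / K > 0` as soon as
`T x ≠ 0`.
-/

lemma phiFun_abs : PhiFun (fun c : ℝ => |c|) where
  even := abs_neg
  one := abs_one
  strictMono a ha b hb hab := by
    simpa [abs_of_pos (Set.mem_Ioi.1 ha), abs_of_pos (Set.mem_Ioi.1 hb)] using hab
  contOn := continuous_abs.continuousOn
  tendsto_zero := by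
    simpa using (continuous_abs.tendsto (0:ℝ)).mono_left nhdsWithin_le_nhds
  tendsto_atTop := tendsto_abs_atTop_atTop

lemma isTNorm_min : IsTNorm min where
  mem a ha b hb := ⟨le_min ha.1 hb.1, (min_le_left a b).trans ha.2⟩
  assoc := min_assoc
  comm := min_comm
  one_right _ ha := min_eq_left ha.2
  mono _ _ _ _ := min_le_min

lemma add_div_add_le_max_div {a b s t : ℝ} (hs : 0 < s) (ht : 0 < t) :
    (a + b) / (s + t) ≤ max (a / s) (b / t) := by
  have ha : a ≤ s * max (a / s) (b / t) := by
    rw [← div_le_iff₀' hs]; exact le_max_left _ _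
  have hb : b ≤ t * max (a / s) (b / t) := by
    rw [← div_le_iff₀' ht]; exact le_max_right _ _
  rw [div_le_iff₀' (add_pos hs ht)]
  linarith

section Nex1

variable {X : Type*} [NormedAddCommGroup X]

lemma nex1_of_lt {x : X} {t : ℝ} (h : ‖x‖ < t) : Nex1 x t = 1 := if_pos h

lemma nex1_of_le {x : X} {t : ℝ} (h : t ≤ ‖x‖) (ht : 0 < t) : Nex1 x t = 1 / 2 := by
  rw [Nex1, if_neg h.not_gt, if_pos ht]

lemma nex1_of_nonpos (x : X) {t : ℝ} (ht : t ≤ 0) : Nex1 x t = 0 := by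
  rw [Nex1, if_neg (ht.trans (norm_nonneg x)).not_gt, if_neg ht.not_gt]

lemma nex1_mem (x : X) (t : ℝ) : Nex1 x t ∈ Set.Icc (0:ℝ) 1 := by
  unfold Nex1; split_ifs <;> norm_num

lemma half_le_nex1 (x : X) {t : ℝ} (ht : 0 < t) : 1 / 2 ≤ Nex1 x t := by
  unfold Nex1; split_ifs <;> norm_num

lemma nex1_monotone (x : X) : Monotone (Nex1 x) := by
  intro a b hab
  unfold Nex1
  split_ifs <;> norm_num <;> linarith

lemma tendsto_nex1_atTop (x : X) : Tendsto (Nex1 x) atTop (𝓝 1) :=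
  tendsto_const_nhds.congr' <| (eventually_gt_atTop ‖x‖).mono fun _ h => (nex1_of_lt h).symm

lemma nex1_eq_one_forall_iff (x : X) : (∀ t > (0:ℝ), Nex1 x t = 1) ↔ x = 0 := by
  refine ⟨fun h => ?_, fun h t ht => nex1_of_lt (by simpa [h] using ht)⟩
  by_contra hx
  have hx' : 0 < ‖x‖ := norm_pos_iff.2 hx
  have := h ‖x‖ hx'
  rw [nex1_of_le le_rfl hx'] at this
  norm_num at this

lemma nex1_add_le (x y : X) (s t : ℝ) :
    min (Nex1 x s) (Nex1 y t) ≤ Nex1 (x + y) (s + t) := by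
  rcases le_or_gt s 0 with hs | hs
  · exact (min_le_left _ _).trans ((nex1_of_nonpos x hs).le.trans (nex1_mem _ _).1)
  rcases le_or_gt t 0 with ht | ht
  · exact (min_le_right _ _).trans ((nex1_of_nonpos y ht).le.trans (nex1_mem _ _).1)
  by_cases hxy : ‖x‖ < s ∧ ‖y‖ < t
  · rw [nex1_of_lt ((norm_add_le x y).trans_lt (add_lt_add hxy.1 hxy.2))]
    exact (min_le_left _ _).trans (nex1_mem x s).2
  · refine le_trans ?_ (half_le_nex1 _ (add_pos hs ht))
    rcases not_and_or.1 hxy with hx | hy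
    · exact (min_le_left _ _).trans (nex1_of_le (not_lt.1 hx) hs).le
    · exact (min_le_right _ _).trans (nex1_of_le (not_lt.1 hy) ht).le

lemma nex1_smul [NormedSpace ℝ X] (c : ℝ) (x : X) {t : ℝ} (ht : 0 < t) (hc : |c| ≠ 0) :
    Nex1 (c • x) t = Nex1 x (t / |c|) := by
  have hc' : 0 < |c| := (abs_nonneg c).lt_of_ne' hc
  have hcond : ‖c • x‖ < t ↔ ‖x‖ < t / |c| := by
    rw [norm_smul, Real.norm_eq_abs, lt_div_iff₀ hc', mul_comm]
  simp only [Nex1, hcond, ht, div_pos ht hc']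

lemma isFuzzyPhiBNorm_nex1 [NormedSpace ℝ X] : IsFuzzyPhiBNorm (Nex1 (X := X)) (|·|) 1 min where
  one_le_K := le_rfl
  phi := phiFun_abs
  tnorm := isTNorm_min
  mem := nex1_mem
  bN1 x _ := nex1_of_nonpos x
  bN2 := nex1_eq_one_forall_iff
  bN3 c x _ ht := nex1_smul c x ht
  bN4 x y s t := by simpa only [one_mul] using nex1_add_le x y s t
  bN5 x := ⟨nex1_monotone x, tendsto_nex1_atTop x⟩

lemma FConv.tendsto_of_nex1 {xs : ℕ → X} {x : X} (h : FConv Nex1 xs x) :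
    Tendsto xs atTop (𝓝 x) := by
  refine Metric.tendsto_nhds.2 fun δ hδ => ?_
  filter_upwards [(h δ hδ).eventually (eventually_gt_nhds (by norm_num : (1:ℝ) / 2 < 1))]
    with n hn
  rw [dist_eq_norm]
  by_contra hle
  rw [nex1_of_le (not_lt.1 hle) hδ] at hn
  exact lt_irrefl _ hn

end Nex1

section Nex2

variable {X : Type*} [NormedAddCommGroup X]

lemma nex2_of_le {x : X} {t : ℝ} (h : ‖x‖ ≤ t) (ht : 0 < t) : Nex2 x t = 1 - ‖x‖ / t :=
  if_pos ⟨h, ht⟩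

lemma nex2_eq_zero_of_not {x : X} {t : ℝ} (h : ¬(‖x‖ ≤ t ∧ 0 < t)) : Nex2 x t = 0 := if_neg h

lemma nex2_mem (x : X) (t : ℝ) : Nex2 x t ∈ Set.Icc (0:ℝ) 1 := by
  unfold Nex2
  split_ifs with h
  · have : 0 ≤ ‖x‖ / t := div_nonneg (norm_nonneg x) h.2.le
    have : ‖x‖ / t ≤ 1 := (div_le_one h.2).2 h.1
    constructor <;> linarith
  · norm_num

lemma nex2_monotone (x : X) : Monotone (Nex2 x) := by
  intro a b hab
  by_cases ha : ‖x‖ ≤ a ∧ 0 < a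
  · rw [nex2_of_le ha.1 ha.2, nex2_of_le (ha.1.trans hab) (ha.2.trans_le hab)]
    gcongr
    exact ha.2
  · rw [nex2_eq_zero_of_not ha]
    exact (nex2_mem x b).1

lemma tendsto_nex2_atTop (x : X) : Tendsto (Nex2 x) atTop (𝓝 1) := by
  have hlim : Tendsto (fun t : ℝ => 1 - ‖x‖ / t) atTop (𝓝 1) := by
    simpa using tendsto_const_nhds.sub ((tendsto_const_nhds (x := ‖x‖)).div_atTop tendsto_id)
  refine hlim.congr' ?_
  filter_upwards [eventually_ge_atTop ‖x‖, eventually_gt_atTop 0] with t h ht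
  exact (nex2_of_le h ht).symm

lemma nex2_eq_one_forall_iff (x : X) : (∀ t > (0:ℝ), Nex2 x t = 1) ↔ x = 0 := by
  refine ⟨fun h => ?_, fun h t ht => by rw [h, nex2_of_le (by simpa using ht.le) ht]; simp⟩
  by_contra hx
  have hx' : 0 < ‖x‖ := norm_pos_iff.2 hx
  have := h ‖x‖ hx'
  rw [nex2_of_le le_rfl hx', div_self hx'.ne'] at this
  norm_num at this

lemma nex2_add_le (x y : X) (s t : ℝ) :
    min (Nex2 x s) (Nex2 y t) ≤ Nex2 (x + y) (s + t) := by
  by_cases hx : ‖x‖ ≤ s ∧ 0 < s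
  · by_cases hy : ‖y‖ ≤ t ∧ 0 < t
    · have hst : 0 < s + t := add_pos hx.2 hy.2
      have hxy : ‖x + y‖ ≤ s + t := (norm_add_le x y).trans (add_le_add hx.1 hy.1)
      rw [nex2_of_le hx.1 hx.2, nex2_of_le hy.1 hy.2, nex2_of_le hxy hst, min_sub_sub_left]
      gcongr
      exact (div_le_div_of_nonneg_right (norm_add_le x y) hst.le).trans
        (add_div_add_le_max_div hx.2 hy.2)
    · exact (min_le_right _ _).trans ((nex2_eq_zero_of_not hy).le.trans (nex2_mem _ _).1)
  · exact (min_le_left _ _).trans ((nex2_eq_zero_of_not hx).le.trans (nex2_mem _ _).1)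

lemma nex2_smul [NormedSpace ℝ X] (c : ℝ) (x : X) {t : ℝ} (ht : 0 < t) (hc : |c| ≠ 0) :
    Nex2 (c • x) t = Nex2 x (t / |c|) := by
  have hc' : 0 < |c| := (abs_nonneg c).lt_of_ne' hc
  have hn : ‖c • x‖ = |c| * ‖x‖ := by rw [norm_smul, Real.norm_eq_abs]
  have hcond : ‖c • x‖ ≤ t ↔ ‖x‖ ≤ t / |c| := by rw [hn, le_div_iff₀ hc', mul_comm]
  have hval : ‖c • x‖ / t = ‖x‖ / (t / |c|) := by rw [hn]; field_simp
  simp only [Nex2, hcond, hval, ht, div_pos ht hc']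

lemma isFuzzyPhiBNorm_nex2 [NormedSpace ℝ X] : IsFuzzyPhiBNorm (Nex2 (X := X)) (|·|) 1 min where
  one_le_K := le_rfl
  phi := phiFun_abs
  tnorm := isTNorm_min
  mem := nex2_mem
  bN1 _ _ ht := nex2_eq_zero_of_not fun h => ht.not_gt h.2
  bN2 := nex2_eq_one_forall_iff
  bN3 c x _ ht := nex2_smul c x ht
  bN4 x y s t := by simpa only [one_mul] using nex2_add_le x y s t
  bN5 x := ⟨nex2_monotone x, tendsto_nex2_atTop x⟩

lemma fConv_nex2_of_tendsto {ys : ℕ → X} {y : X} (h : Tendsto ys atTop (𝓝 y)) :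
    FConv Nex2 ys y := by
  intro t ht
  have hnorm := tendsto_iff_norm_sub_tendsto_zero.1 h
  have hlim : Tendsto (fun n => 1 - ‖ys n - y‖ / t) atTop (𝓝 1) := by
    simpa using tendsto_const_nhds.sub (hnorm.div_const t)
  refine hlim.congr' ?_
  filter_upwards [hnorm.eventually (eventually_le_nhds ht)] with n hn
  exact (nex2_of_le hn ht).symm

lemma half_le_nex2_iff (y : X) (s : ℝ) : 1 / 2 ≤ Nex2 y s ↔ 0 < s ∧ 2 * ‖y‖ ≤ s := by
  by_cases h : ‖y‖ ≤ s ∧ 0 < s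
  · rw [nex2_of_le h.1 h.2, le_sub_comm, div_le_iff₀ h.2]
    constructor
    · intro hle; exact ⟨h.2, by linarith⟩
    · intro hle; linarith [hle.2]
  · rw [nex2_eq_zero_of_not h]
    constructor
    · intro hle; norm_num at hle
    · rintro ⟨hs, hle⟩
      exact absurd ⟨by linarith [norm_nonneg y], hs⟩ h

end Nex2

section Operators

variable {X Y : Type*} [NormedAddCommGroup X] [Module ℝ X] [NormedAddCommGroup Y] [Module ℝ Y]

lemma fContAt_nex1_nex2_of_continuousAt {T : X →ₗ[ℝ] Y} {x : X} (hT : ContinuousAt T x) :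
    FContAt Nex1 Nex2 T x :=
  fun _ hxs => fConv_nex2_of_tendsto (hT.tendsto.comp hxs.tendsto_of_nex1)

lemma not_fuzzyBounded_nex1_nex2 {K : ℝ} (hK : 0 < K) {T : X →ₗ[ℝ] Y} (hT : T ≠ 0) :
    ¬ FuzzyBounded Nex1 Nex2 K T := by
  intro hbdd
  obtain ⟨x, hx⟩ := DFunLike.ne_iff.1 hT
  obtain ⟨M, -, hM⟩ := hbdd (1 / 2) (by norm_num)
  have hTx : 0 < ‖T x‖ := norm_pos_iff.2 hx
  have hN1 : sInf {t | 0 < t ∧ 1 - 1 / 2 ≤ Nex1 x t} = 0 := by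
    have hset : {t | 0 < t ∧ 1 - 1 / 2 ≤ Nex1 x t} = Set.Ioi 0 :=
      Set.ext fun t => ⟨And.left, fun ht => ⟨ht, by linarith [half_le_nex1 x ht]⟩⟩
    rw [hset, csInf_Ioi]
  have hN2 : 2 * ‖T x‖ / K ≤ sInf {t | 0 < t ∧ 1 / 2 ≤ Nex2 (T x) (K * t)} := by
    simp only [half_le_nex2_iff, mul_pos_iff_of_pos_left hK]
    refine le_csInf ⟨2 * ‖T x‖ / K, by positivity, by positivity,
      (mul_div_cancel₀ _ hK.ne').ge⟩ ?_
    rintro t ⟨-, -, ht⟩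
    rwa [div_le_iff₀' hK]
  have := hN2.trans (hM x)
  rw [hN1, mul_zero] at this
  have : 0 < 2 * ‖T x‖ / K := by positivity
  linarith

end Operators

theorem stmt6 {X : Type*} [NormedAddCommGroup X] [NormedSpace ℝ X] [Nontrivial X] :
    IsFuzzyPhiBNorm (Nex1 (X := X)) (fun c => |c|) 1 min ∧
    IsFuzzyPhiBNorm (Nex2 (X := X)) (fun c => |c|) 1 min ∧
    (∀ x : X, FContAt Nex1 Nex2 ((2:ℝ) • (LinearMap.id : X →ₗ[ℝ] X)) x) ∧
    ¬ FuzzyBounded Nex1 Nex2 1 ((2:ℝ) • (LinearMap.id : X →ₗ[ℝ] X)) := by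
  have hT : ((2:ℝ) • (LinearMap.id : X →ₗ[ℝ] X)) ≠ 0 := by
    obtain ⟨x, hx⟩ := exists_ne (0 : X)
    exact DFunLike.ne_iff.2 ⟨x, by simpa using hx⟩
  refine ⟨isFuzzyPhiBNorm_nex1, isFuzzyPhiBNorm_nex2, fun x => ?_,
    not_fuzzyBounded_nex1_nex2 one_pos hT⟩
  refine fContAt_nex1_nex2_of_continuousAt (Continuous.continuousAt ?_)
  exact continuous_id.const_smul (2:ℝ)
end

section
/- Let (X, N, φ, K, *) be a fuzzy strong φ-b-normed linear space whose t-norm * is lower semi-continuous (in the sense that for each β ∈ (0,1) there exists α ∈ (0,1) with (1−α)*(1−α) > 1−β). Then every l-fuzzy convergent sequence in X has a unique limit: if inf{t>0 : N(xₙ − x, t) > 1−α} → 0 and inf{t>0 : N(xₙ − y, t) > 1−α} → 0 as n → ∞ for every α ∈ (0,1), then x = y. -/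
open Filter Topology

theorem stmt9 {X : Type*} [AddCommGroup X] [Module ℝ X]
    (N : X → ℝ → ℝ) (φ : ℝ → ℝ) (K : ℝ) (star : ℝ → ℝ → ℝ)
    (hN : IsFuzzyPhiBNorm N φ K star)
    (hlsc : ∀ β ∈ Set.Ioo (0:ℝ) 1, ∃ α ∈ Set.Ioo (0:ℝ) 1,
        1 - β < star (1 - α) (1 - α))
    (xs : ℕ → X) (x y : X)
    (hx : ∀ α ∈ Set.Ioo (0:ℝ) 1,
        Tendsto (fun n => sInf {t | 0 < t ∧ 1 - α < N (xs n - x) t}) atTop (nhds 0))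
    (hy : ∀ α ∈ Set.Ioo (0:ℝ) 1,
        Tendsto (fun n => sInf {t | 0 < t ∧ 1 - α < N (xs n - y) t}) atTop (nhds 0)) :
    x = y := by
  have hK : (0:ℝ) < K := lt_of_lt_of_le one_pos hN.one_le_K
  -- symmetry
  have hsym : ∀ (z : X) (t : ℝ), 0 < t → N (-z) t = N z t := by
    intro z t ht
    have hφ : φ (-1) = 1 := by rw [show (-1:ℝ) = -(1:ℝ) from rfl, hN.phi.even 1, hN.phi.one]
    have := hN.bN3 (-1) z t ht (by rw [hφ]; norm_num)
    simpa [hφ] using this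
  -- key convergence helper
  have hconv : ∀ (w : X), (∀ α ∈ Set.Ioo (0:ℝ) 1,
      Tendsto (fun n => sInf {t | 0 < t ∧ 1 - α < N (xs n - w) t}) atTop (nhds 0)) →
      ∀ α ∈ Set.Ioo (0:ℝ) 1, ∀ ε > (0:ℝ),
      ∀ᶠ n in atTop, 1 - α < N (xs n - w) ε := by
    intro w hw α hα ε hε
    have h1 := hw α hα
    have h2 : ∀ᶠ n in atTop,
        sInf {t | 0 < t ∧ 1 - α < N (xs n - w) t} < ε := by
      have := h1 (Iio_mem_nhds hε)
      simpa using this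
    filter_upwards [h2] with n hn
    set S := {t | 0 < t ∧ 1 - α < N (xs n - w) t} with hS
    have hne : S.Nonempty := by
      have hnh : Set.Ioi (1 - α) ∈ nhds (1:ℝ) := Ioi_mem_nhds (by linarith [hα.1])
      have hev : ∀ᶠ T in atTop, N (xs n - w) T ∈ Set.Ioi (1 - α) :=
        (hN.bN5 (xs n - w)).2 hnh
      obtain ⟨T, hT⟩ := (hev.and (eventually_gt_atTop (0:ℝ))).exists
      exact ⟨T, hT.2, hT.1⟩
    have hbdd : BddBelow S := ⟨0, fun s hs => le_of_lt hs.1⟩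
    obtain ⟨t', ht', hlt⟩ := (csInf_lt_iff hbdd hne).mp hn
    exact lt_of_lt_of_le ht'.2 ((hN.bN5 (xs n - w)).1 (le_of_lt hlt))
  -- N (x - y) t = 1 for all t > 0
  have key : ∀ t > (0:ℝ), N (x - y) t = 1 := by
    intro t ht
    have hle : N (x - y) t ≤ 1 := (hN.mem _ _).2
    rcases eq_or_lt_of_le hle with h | h
    · exact h
    exfalso
    set β := min (1 - N (x - y) t) (1/2) with hβ
    have hβmem : β ∈ Set.Ioo (0:ℝ) 1 := by
      constructor
      · exact lt_min (by linarith) (by norm_num)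
      · exact lt_of_le_of_lt (min_le_right _ _) (by norm_num)
    obtain ⟨α, hα, hstar⟩ := hlsc β hβmem
    have h1 := hconv x hx α hα (t/2) (by linarith)
    have h2 := hconv y hy α hα (t/(2*K)) (by positivity)
    obtain ⟨n, hn1, hn2⟩ := (h1.and h2).exists
    have hb4 := hN.bN4 (x - xs n) (xs n - y) (t/2) (t/(2*K))
    have heq : (x - xs n) + (xs n - y) = x - y := by abel
    have heqt : t/2 + K * (t/(2*K)) = t := by field_simp; ring
    rw [heq, heqt] at hb4
    have hx' : N (x - xs n) (t/2) = N (xs n - x) (t/2) := by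
      rw [show x - xs n = -(xs n - x) by abel]
      exact hsym _ _ (by linarith)
    have hmono := hN.tnorm.mono (1-α) (N (x - xs n) (t/2)) (1-α)
      (N (xs n - y) (t/(2*K))) (by rw [hx']; exact le_of_lt hn1) (le_of_lt hn2)
    have : 1 - β < N (x - y) t := lt_of_lt_of_le hstar (le_trans hmono hb4)
    have hβle : β ≤ 1 - N (x - y) t := min_le_left _ _
    linarith
  have : x - y = 0 := (hN.bN2 (x - y)).mp key
  exact sub_eq_zero.mp this
end

section
/- Let X, Y be fuzzy strong φ-b-normed linear spaces with the same φ and K, let *₂ be the lower semi-continuous t-norm of Y, and for x ≠ 0 write d_{1−α}(x) = inf{t>0 : N₁(x,t) ≥ 1−α}. For a fuzzy bounded linear operator T define N(T,s) = sup{α ∈ (0,1) : sup_{x ≠ 0} inf{ t/d_{1−α}(x) : t > 0, N₂(Tx,t) ≥ α } ≤ s} for (T,s) ≠ (0,0) and N(0,0)=0. Then N satisfies the homogeneity axiom: N(λT, s) = N(T, s/φ(λ)) for every scalar λ > 0 and all s. -/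
open Filter Topology

noncomputable def dd {X : Type*} [AddCommGroup X] [Module ℝ X]
    (N1 : X → ℝ → ℝ) (α : ℝ) (x : X) : ℝ :=
  sInf {t | 0 < t ∧ 1 - α ≤ N1 x t}

noncomputable def opSup {X Y : Type*} [AddCommGroup X] [Module ℝ X]
    [AddCommGroup Y] [Module ℝ Y]
    (N1 : X → ℝ → ℝ) (N2 : Y → ℝ → ℝ) (T : X →ₗ[ℝ] Y) (α : ℝ) : ℝ :=
  sSup {r | ∃ x : X, x ≠ 0 ∧
    r = sInf ((fun t => t / dd N1 α x) '' {t | 0 < t ∧ α ≤ N2 (T x) t})}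

open scoped Classical in
noncomputable def opN {X Y : Type*} [AddCommGroup X] [Module ℝ X]
    [AddCommGroup Y] [Module ℝ Y]
    (N1 : X → ℝ → ℝ) (N2 : Y → ℝ → ℝ) (T : X →ₗ[ℝ] Y) (s : ℝ) : ℝ :=
  if T = 0 ∧ s = 0 then 0
  else sSup {α | α ∈ Set.Ioo (0:ℝ) 1 ∧ opSup N1 N2 T α ≤ s}

/-! By (bN3), `N₂(λTx, t) = N₂(Tx, t / φ λ)`, so every level set `{t > 0 | α ≤ N₂(λTx, t)}` is the
`φ λ`-dilate of the one for `T`. Infima and suprema commute with dilation by `φ λ > 0`, hence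
`opSup (λT) α = φ λ · opSup T α`, and the condition `opSup (λT) α ≤ s` defining `N(λT, s)` is the
condition `opSup T α ≤ s / φ λ` defining `N(T, s / φ λ)`. -/

open scoped Pointwise

lemma PhiFun.pos {φ : ℝ → ℝ} (h : PhiFun φ) {t : ℝ} (ht : 0 < t) : 0 < φ t := by
  have hhalf : 0 < t / 2 := half_pos ht
  have hnonneg : 0 ≤ φ (t / 2) := by
    refine le_of_tendsto h.tendsto_zero ?_
    filter_upwards [Ioo_mem_nhdsGT hhalf] with u hu
    exact (h.strictMono hu.1 hhalf hu.2).le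
  exact hnonneg.trans_lt (h.strictMono hhalf ht (half_lt_self ht))

lemma IsFuzzyPhiBNorm.setOf_le_smul {X : Type*} [AddCommGroup X] [Module ℝ X]
    {N : X → ℝ → ℝ} {φ : ℝ → ℝ} {K : ℝ} {star : ℝ → ℝ → ℝ} (hN : IsFuzzyPhiBNorm N φ K star)
    {c : ℝ} (hc : 0 < φ c) (α : ℝ) (y : X) :
    {t | 0 < t ∧ α ≤ N (c • y) t} = φ c • {t | 0 < t ∧ α ≤ N y t} := by
  ext t
  rw [Set.mem_smul_set_iff_inv_smul_mem₀ hc.ne']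
  simp only [Set.mem_ofPred_eq, smul_eq_mul, inv_mul_eq_div]
  constructor
  · rintro ⟨ht, hα⟩
    exact ⟨div_pos ht hc, hN.bN3 c y t ht hc.ne' ▸ hα⟩
  · rintro ⟨ht, hα⟩
    have ht' : 0 < t := (div_pos_iff_of_pos_right hc).1 ht
    exact ⟨ht', (hN.bN3 c y t ht' hc.ne').symm ▸ hα⟩

lemma opSup_smul {X Y : Type*} [AddCommGroup X] [Module ℝ X] [AddCommGroup Y] [Module ℝ Y]
    {N1 : X → ℝ → ℝ} {N2 : Y → ℝ → ℝ} {φ : ℝ → ℝ} {K : ℝ} {star : ℝ → ℝ → ℝ}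
    (hN2 : IsFuzzyPhiBNorm N2 φ K star) (T : X →ₗ[ℝ] Y) {lam : ℝ} (hlam : 0 < lam) (α : ℝ) : opSup N1 N2 (lam • T) α = φ lam * opSup N1 N2 T α := by
  have hc : 0 < φ lam := hN2.phi.pos hlam
  have hquot : ∀ x : X,
      sInf ((fun t => t / dd N1 α x) '' {t | 0 < t ∧ α ≤ N2 ((lam • T) x) t}) =
        φ lam * sInf ((fun t => t / dd N1 α x) '' {t | 0 < t ∧ α ≤ N2 (T x) t}) := by
    intro x
    rw [LinearMap.smul_apply, hN2.setOf_le_smul hc, Set.image_smul_comm _ _ _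
      (fun t => by simp only [smul_eq_mul, mul_div_assoc]), Real.sInf_smul_of_nonneg hc.le,
      smul_eq_mul]
  unfold opSup
  rw [← smul_eq_mul, ← Real.sSup_smul_of_nonneg hc.le]
  congr 1
  ext r
  simp only [hquot, Set.mem_smul_set, Set.mem_ofPred_eq, smul_eq_mul]
  aesop

theorem stmt11_general {X Y : Type*} [AddCommGroup X] [Module ℝ X] [AddCommGroup Y] [Module ℝ Y]
    (N1 : X → ℝ → ℝ) (N2 : Y → ℝ → ℝ) (φ : ℝ → ℝ) (K : ℝ)
    (star2 : ℝ → ℝ → ℝ)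
    (hN2 : IsFuzzyPhiBNorm N2 φ K star2)
    (T : X →ₗ[ℝ] Y)
    (lam : ℝ) (hlam : 0 < lam) :
    ∀ s : ℝ, opN N1 N2 (lam • T) s = opN N1 N2 T (s / φ lam) := by
  intro s
  have hc : 0 < φ lam := hN2.phi.pos hlam
  have hs : s / φ lam = 0 ↔ s = 0 := div_eq_zero_iff.trans (or_iff_left hc.ne')
  have hα : ∀ α, opSup N1 N2 (lam • T) α ≤ s ↔ opSup N1 N2 T α ≤ s / φ lam := fun α => by
    rw [opSup_smul hN2 T hlam, le_div_iff₀ hc, mul_comm]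
  classical
  unfold opN
  refine if_congr (and_congr (smul_eq_zero_iff_right hlam.ne') hs.symm) rfl ?_
  simp only [hα]

theorem stmt11 {X Y : Type*} [AddCommGroup X] [Module ℝ X] [AddCommGroup Y] [Module ℝ Y]
    (N1 : X → ℝ → ℝ) (N2 : Y → ℝ → ℝ) (φ : ℝ → ℝ) (K : ℝ)
    (star1 star2 : ℝ → ℝ → ℝ)
    (hN1 : IsFuzzyPhiBNorm N1 φ K star1) (hN2 : IsFuzzyPhiBNorm N2 φ K star2)
    (hN6 : ∀ x : X, x ≠ 0 → ∀ α ∈ Set.Ioo (0:ℝ) 1, 0 < dd N1 α x)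
    (hlsc : ∀ a b c : ℝ, c < star2 a b → ∃ a' < a, ∃ b' < b, c < star2 a' b')
    (T : X →ₗ[ℝ] Y) (hT : FuzzyBounded N1 N2 K T)
    (lam : ℝ) (hlam : 0 < lam) :
    ∀ s : ℝ, opN N1 N2 (lam • T) s = opN N1 N2 T (s / φ lam) :=
  stmt11_general N1 N2 φ K star2 hN2 T lam hlam
end
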